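/- Let S_n be the star tree on n ≥ 3 vertices. Then a real number λ ≠ 0 is an eigenvalue of Max4PC_{S_n} if and only if λ = (n−1)² + sqrt((n−1)⁴ + (n−1)·binom(n−1,2)) or λ = (n−1)² − sqrt((n−1)⁴ + (n−1)·binom(n−1,2)). -/
import Mathlib


open SimpleGraph

variable {V : Type*}

/-- The maximum of the three four-point sums for vertices `w, x, y, z`:
`max (d w x + d y z) (max (d w y + d x z) (d w z + d x y))`.
This is the entry of the matrix `Max4PC` in row `{w,x}` and column `{y,z}`. -/
noncomputable def max4 (G : SimpleGraph V) (w x y z : V) : ℕ :=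
  max (G.dist w x + G.dist y z) (max (G.dist w y + G.dist x z) (G.dist w z + G.dist x y))

/-- The `Max4PC` entry as a symmetric function of two unordered pairs. -/
noncomputable def max4Sym2 (G : SimpleGraph V) : Sym2 V → Sym2 V → ℕ :=
  Sym2.lift₂ ⟨fun w x y z => max4 G w x y z, by
    intro a₁ a₂ b₁ b₂
    simp only [max4]
    constructor
    · rw [show G.dist a₂ a₁ = G.dist a₁ a₂ from G.dist_comm]
      omega
    · rw [show G.dist b₂ b₁ = G.dist b₁ b₂ from G.dist_comm]
      omega⟩

/-- The matrix `Max4PC_T` as a real matrix, with rows and columns indexed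
by the 2-element subsets of the vertex set (non-diagonal elements of `Sym2 V`). -/
noncomputable def max4MatrixR [Fintype V] [DecidableEq V] (G : SimpleGraph V) :
    Matrix {s : Sym2 V // ¬ s.IsDiag} {s : Sym2 V // ¬ s.IsDiag} ℝ :=
  fun p q => (max4Sym2 G p.1 q.1 : ℝ)

section Aux
variable [DecidableEq V] {G : SimpleGraph V} {c : V}

lemma star_dist (hstar : ∀ x y : V, G.Adj x y ↔ x ≠ y ∧ (x = c ∨ y = c)) (u v : V) :
    G.dist u v = if u = v then 0 else if u = c ∨ v = c then 1 else 2 := by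
  split_ifs with h1 h2
  · subst h1; exact SimpleGraph.dist_self
  · exact SimpleGraph.dist_eq_one_iff_adj.mpr ((hstar u v).mpr ⟨h1, h2⟩)
  · push_neg at h2
    have huc : G.Adj u c := (hstar u c).mpr ⟨h2.1, Or.inr rfl⟩
    have hcv : G.Adj c v := (hstar c v).mpr ⟨fun h => h2.2 h.symm, Or.inl rfl⟩
    have hle : G.dist u v ≤ 2 := by
      have hw := SimpleGraph.dist_le (SimpleGraph.Walk.cons huc hcv.toWalk)
      simpa [SimpleGraph.Adj.toWalk] using hw
    have hpos : 0 < G.dist u v :=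
      SimpleGraph.Reachable.pos_dist_of_ne ⟨SimpleGraph.Walk.cons huc hcv.toWalk⟩ h1
    have hne1 : G.dist u v ≠ 1 := by
      intro h
      rcases ((hstar u v).mp (SimpleGraph.dist_eq_one_iff_adj.mp h)).2 with h' | h'
      · exact h2.1 h'
      · exact h2.2 h'
    omega

lemma star_dist_le (hstar : ∀ x y : V, G.Adj x y ↔ x ≠ y ∧ (x = c ∨ y = c)) (u v : V) :
    G.dist u v ≤ 2 := by
  rw [star_dist hstar]; split_ifs <;> omega

lemma max4Sym2_mk (G : SimpleGraph V) (w x y z : V) :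
    max4Sym2 G s(w, x) s(y, z) = max4 G w x y z := rfl

lemma star_cc (hstar : ∀ x y : V, G.Adj x y ↔ x ≠ y ∧ (x = c ∨ y = c))
    {a b : V} (ha : a ≠ c) (hb : b ≠ c) : max4 G c a c b = 2 := by
  have h1 : G.dist c a = 1 := by rw [star_dist hstar]; simp [Ne.symm ha]
  have h2 : G.dist c b = 1 := by rw [star_dist hstar]; simp [Ne.symm hb]
  have h3 : G.dist c c = 0 := by rw [star_dist hstar]; simp
  have h4 : G.dist a c = 1 := by rw [star_dist hstar]; simp [ha]
  have h5 : G.dist a b ≤ 2 := star_dist_le hstar a b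
  simp only [max4, h1, h2, h3, h4]
  omega

lemma star_cl (hstar : ∀ x y : V, G.Adj x y ↔ x ≠ y ∧ (x = c ∨ y = c))
    {a y z : V} (ha : a ≠ c) (hy : y ≠ c) (hz : z ≠ c) (hyz : y ≠ z) :
    max4 G c a y z = 3 := by
  have h1 : G.dist c a = 1 := by rw [star_dist hstar]; simp [Ne.symm ha]
  have h2 : G.dist y z = 2 := by rw [star_dist hstar]; simp [hyz, hy, hz]
  have h3 : G.dist c y = 1 := by rw [star_dist hstar]; simp [Ne.symm hy]
  have h4 : G.dist c z = 1 := by rw [star_dist hstar]; simp [Ne.symm hz]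
  have h5 : G.dist a z ≤ 2 := star_dist_le hstar a z
  have h6 : G.dist a y ≤ 2 := star_dist_le hstar a y
  simp only [max4, h1, h2, h3, h4]
  omega

lemma star_lc (hstar : ∀ x y : V, G.Adj x y ↔ x ≠ y ∧ (x = c ∨ y = c))
    {w x b : V} (hw : w ≠ c) (hx : x ≠ c) (hwx : w ≠ x) (hb : b ≠ c) :
    max4 G w x c b = 3 := by
  have h1 : G.dist w x = 2 := by rw [star_dist hstar]; simp [hwx, hw, hx]
  have h2 : G.dist c b = 1 := by rw [star_dist hstar]; simp [Ne.symm hb]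
  have h3 : G.dist w c = 1 := by rw [star_dist hstar]; simp [hw]
  have h4 : G.dist x c = 1 := by rw [star_dist hstar]; simp [hx]
  have h5 : G.dist x b ≤ 2 := star_dist_le hstar x b
  have h6 : G.dist w b ≤ 2 := star_dist_le hstar w b
  simp only [max4, h1, h2, h3, h4]
  omega

lemma star_ll (hstar : ∀ x y : V, G.Adj x y ↔ x ≠ y ∧ (x = c ∨ y = c))
    {w x y z : V} (hw : w ≠ c) (hx : x ≠ c) (hy : y ≠ c) (hz : z ≠ c)
    (hwx : w ≠ x) (hyz : y ≠ z) : max4 G w x y z = 4 := by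
  have h1 : G.dist w x = 2 := by rw [star_dist hstar]; simp [hwx, hw, hx]
  have h2 : G.dist y z = 2 := by rw [star_dist hstar]; simp [hyz, hy, hz]
  have h3 : G.dist w y ≤ 2 := star_dist_le hstar w y
  have h4 : G.dist x z ≤ 2 := star_dist_le hstar x z
  have h5 : G.dist w z ≤ 2 := star_dist_le hstar w z
  have h6 : G.dist x y ≤ 2 := star_dist_le hstar x y
  simp only [max4, h1, h2]
  omega

lemma star_entry (hstar : ∀ x y : V, G.Adj x y ↔ x ≠ y ∧ (x = c ∨ y = c))
    (p q : Sym2 V) (hp : ¬p.IsDiag) (hq : ¬q.IsDiag) :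
    max4Sym2 G p q =
      if c ∈ p then (if c ∈ q then 2 else 3) else (if c ∈ q then 3 else 4) := by
  revert hp hq
  refine Sym2.inductionOn₂ p q ?_
  intro w x y z hp hq
  rw [Sym2.mk_isDiag_iff] at hp hq
  simp only [Sym2.mem_iff]
  have swpL : s(w, x) = s(x, w) := Sym2.eq_swap
  have swpR : s(y, z) = s(z, y) := Sym2.eq_swap
  by_cases hpc : c = w ∨ c = x <;> by_cases hqc : c = y ∨ c = z <;>
    simp only [hpc, hqc, if_true, if_false, if_pos, if_neg, not_false_iff]
  · rcases hpc with rfl | rfl <;> rcases hqc with rfl | rfl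
    · rw [max4Sym2_mk]; exact star_cc hstar (Ne.symm hp) (Ne.symm hq)
    · rw [swpR, max4Sym2_mk]; exact star_cc hstar (Ne.symm hp) hq
    · rw [swpL, max4Sym2_mk]; exact star_cc hstar hp (Ne.symm hq)
    · rw [swpL, swpR, max4Sym2_mk]; exact star_cc hstar hp hq
  · push_neg at hqc
    rcases hpc with rfl | rfl
    · rw [max4Sym2_mk]; exact star_cl hstar (Ne.symm hp) (Ne.symm hqc.1) (Ne.symm hqc.2) hq
    · rw [swpL, max4Sym2_mk]; exact star_cl hstar hp (Ne.symm hqc.1) (Ne.symm hqc.2) hq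
  · push_neg at hpc
    rcases hqc with rfl | rfl
    · rw [max4Sym2_mk]; exact star_lc hstar (Ne.symm hpc.1) (Ne.symm hpc.2) hp (Ne.symm hq)
    · rw [swpR, max4Sym2_mk]; exact star_lc hstar (Ne.symm hpc.1) (Ne.symm hpc.2) hp hq
  · push_neg at hpc hqc
    rw [max4Sym2_mk]
    exact star_ll hstar (Ne.symm hpc.1) (Ne.symm hpc.2) (Ne.symm hqc.1) (Ne.symm hqc.2) hp hq


lemma card_filter_mem [Fintype V] :
    (Finset.univ.filter (fun q : {s : Sym2 V // ¬ s.IsDiag} => c ∈ q.1)).card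
      = Fintype.card V - 1 := by
  rw [show Fintype.card V - 1 = (Finset.univ.erase c).card by
    rw [Finset.card_erase_of_mem (Finset.mem_univ c), Finset.card_univ]]
  refine Finset.card_bij' (fun q hq => Sym2.Mem.other' (Finset.mem_filter.mp hq).2)
    (fun v hv => ⟨s(c, v), by
      rw [Sym2.mk_isDiag_iff]; exact Ne.symm (Finset.mem_erase.mp hv).1⟩) ?_ ?_ ?_ ?_
  · intro q hq
    rw [Finset.mem_erase]
    refine ⟨?_, Finset.mem_univ _⟩
    show Sym2.Mem.other' (Finset.mem_filter.mp hq).2 ≠ c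
    rw [← Sym2.other_eq_other']
    exact Sym2.other_ne q.2 (Finset.mem_filter.mp hq).2
  · intro v hv
    rw [Finset.mem_filter]
    exact ⟨Finset.mem_univ _, Sym2.mem_mk_left c v⟩
  · intro q hq
    exact Subtype.ext (Sym2.other_spec' (Finset.mem_filter.mp hq).2)
  · intro v hv
    exact Sym2.congr_right.mp (Sym2.other_spec' _)


end Aux

/-- A nonzero real number is an eigenvalue of the `Max4PC` matrix of the star tree
on `n ≥ 3` vertices if and only if it equals
`(n-1)² ± √((n-1)⁴ + (n-1)·C(n-1,2))`. -/
theorem eigenvalues_max4Matrix_star {V : Type*} [Fintype V] [DecidableEq V]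
    (G : SimpleGraph V) (c : V)
    (hstar : ∀ x y : V, G.Adj x y ↔ x ≠ y ∧ (x = c ∨ y = c))
    (hn : 3 ≤ Fintype.card V) (x : ℝ) (hx : x ≠ 0) :
    (∃ V₀ : {s : Sym2 V // ¬ s.IsDiag} → ℝ, V₀ ≠ 0 ∧
        (max4MatrixR G).mulVec V₀ = x • V₀) ↔
      (x = ((Fintype.card V : ℝ) - 1) ^ 2 +
          Real.sqrt (((Fintype.card V : ℝ) - 1) ^ 4 +
            ((Fintype.card V : ℝ) - 1) * (Nat.choose (Fintype.card V - 1) 2 : ℝ)) ∨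
       x = ((Fintype.card V : ℝ) - 1) ^ 2 -
          Real.sqrt (((Fintype.card V : ℝ) - 1) ^ 4 +
            ((Fintype.card V : ℝ) - 1) * (Nat.choose (Fintype.card V - 1) 2 : ℝ))) := by
  classical
  set n := Fintype.card V with hndef
  set m := n - 1 with hmdef
  set k := m.choose 2 with hkdef
  have hm2 : 2 ≤ m := by omega
  have hk1 : 0 < k := Nat.choose_pos hm2
  set F1 := Finset.univ.filter (fun q : {s : Sym2 V // ¬ s.IsDiag} => c ∈ q.1) with hF1
  set F2 := Finset.univ.filter (fun q : {s : Sym2 V // ¬ s.IsDiag} => ¬ c ∈ q.1) with hF2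
  have hcard1 : F1.card = m := card_filter_mem
  have hcard2 : F2.card = k := by
    have hsum := Finset.card_filter_add_card_filter_not
      (s := (Finset.univ : Finset {s : Sym2 V // ¬ s.IsDiag}))
      (p := fun q : {s : Sym2 V // ¬ s.IsDiag} => c ∈ q.1)
    rw [Finset.card_univ, Sym2.card_subtype_not_diag, ← hndef] at hsum
    have hchoose : n.choose 2 = m + m.choose 2 := by
      obtain ⟨m', hm'⟩ : ∃ m', n = m' + 1 := ⟨n - 1, by omega⟩
      have hmm : m = m' := by omega
      rw [hm', hmm, Nat.choose_succ_succ, Nat.choose_one_right]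
    rw [← hF1, ← hF2] at hsum
    omega
  have hmr : ((m : ℝ)) = (n : ℝ) - 1 := by
    have h1 : 1 ≤ n := by omega
    push_cast [hmdef, Nat.cast_sub h1]
    ring
  have h2k : (2 : ℝ) * (k : ℝ) = (m : ℝ) * ((m : ℝ) - 1) := by
    have hnat : 2 * k = m * (m - 1) := by
      rw [hkdef, Nat.choose_two_right, Nat.mul_div_cancel']
      have h := Nat.even_mul_succ_self (m - 1)
      rw [show m - 1 + 1 = m by omega] at h
      exact (Even.two_dvd (by rwa [Nat.mul_comm] at h))
    have hm1 : ((m - 1 : ℕ) : ℝ) = (m : ℝ) - 1 := by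
      have : 1 ≤ m := by omega
      push_cast [Nat.cast_sub this]; ring
    calc (2 : ℝ) * k = ((2 * k : ℕ) : ℝ) := by push_cast; ring
      _ = ((m * (m - 1) : ℕ) : ℝ) := by rw [hnat]
      _ = (m : ℝ) * ((m : ℝ) - 1) := by push_cast [hm1]; ring
  have hmr0 : (0 : ℝ) < (m : ℝ) := by exact_mod_cast (by omega : 0 < m)
  have hkr0 : (0 : ℝ) < (k : ℝ) := by exact_mod_cast hk1
  -- the row formula for mulVec
  have key : ∀ (W : {s : Sym2 V // ¬ s.IsDiag} → ℝ) (p : {s : Sym2 V // ¬ s.IsDiag}),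
      (max4MatrixR G).mulVec W p =
        (if c ∈ p.1 then (2:ℝ) else 3) * (∑ q ∈ F1, W q) +
        (if c ∈ p.1 then (3:ℝ) else 4) * (∑ q ∈ F2, W q) := by
    intro W p
    show ∑ q, max4MatrixR G p q * W q = _
    rw [← Finset.sum_filter_add_sum_filter_not Finset.univ
      (fun q : {s : Sym2 V // ¬ s.IsDiag} => c ∈ q.1) (fun q => max4MatrixR G p q * W q)]
    rw [← hF1, ← hF2]
    congr 1
    · rw [Finset.mul_sum]
      refine Finset.sum_congr rfl fun q hq => ?_
      have hq' : c ∈ q.1 := by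
        have := Finset.mem_filter.mp (hF1 ▸ hq)
        exact this.2
      unfold max4MatrixR
      rw [star_entry hstar p.1 q.1 p.2 q.2]
      by_cases hp : c ∈ p.1 <;> simp [hp, hq']
    · rw [Finset.mul_sum]
      refine Finset.sum_congr rfl fun q hq => ?_
      have hq' : ¬ c ∈ q.1 := by
        have := Finset.mem_filter.mp (hF2 ▸ hq)
        exact this.2
      unfold max4MatrixR
      rw [star_entry hstar p.1 q.1 p.2 q.2]
      by_cases hp : c ∈ p.1 <;> simp [hp, hq']
  set E1 : ℝ := ((n : ℝ) - 1) ^ 2 with hE1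
  set D : ℝ := ((n : ℝ) - 1) ^ 4 + ((n : ℝ) - 1) * (k : ℝ) with hD
  have hn3 : (3 : ℝ) ≤ (n : ℝ) := by exact_mod_cast hn
  have hD0 : (0 : ℝ) ≤ D := by
    rw [hD]
    have h1 : (0 : ℝ) ≤ (n : ℝ) - 1 := by linarith
    exact add_nonneg (pow_nonneg h1 4) (mul_nonneg h1 (Nat.cast_nonneg k))
  constructor
  · rintro ⟨W, hW0, hWe⟩
    set S1 := ∑ q ∈ F1, W q with hS1def
    set S2 := ∑ q ∈ F2, W q with hS2def
    have hrow : ∀ p : {s : Sym2 V // ¬ s.IsDiag},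
        x * W p = (if c ∈ p.1 then (2:ℝ) else 3) * S1 + (if c ∈ p.1 then (3:ℝ) else 4) * S2 := by
      intro p
      have h := congrFun hWe p
      rw [key W p] at h
      simpa using h.symm
    have hS1 : x * S1 = (m : ℝ) * (2 * S1 + 3 * S2) := by
      have hcst : ∀ q ∈ F1, x * W q = 2 * S1 + 3 * S2 := by
        intro q hq
        have hq' : c ∈ q.1 := by
          have h2 := Finset.mem_filter.mp (hF1 ▸ hq)
          exact h2.2
        rw [hrow q, if_pos hq', if_pos hq']
      calc x * S1 = ∑ q ∈ F1, (x * W q) := by rw [hS1def, Finset.mul_sum]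
        _ = ∑ _q ∈ F1, (2 * S1 + 3 * S2) := Finset.sum_congr rfl hcst
        _ = (m : ℝ) * (2 * S1 + 3 * S2) := by
            rw [Finset.sum_const, hcard1, nsmul_eq_mul]
    have hS2 : x * S2 = (k : ℝ) * (3 * S1 + 4 * S2) := by
      have hcst : ∀ q ∈ F2, x * W q = 3 * S1 + 4 * S2 := by
        intro q hq
        have hq' : ¬ c ∈ q.1 := by
          have h2 := Finset.mem_filter.mp (hF2 ▸ hq)
          exact h2.2
        rw [hrow q, if_neg hq', if_neg hq']
      calc x * S2 = ∑ q ∈ F2, (x * W q) := by rw [hS2def, Finset.mul_sum]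
        _ = ∑ _q ∈ F2, (3 * S1 + 4 * S2) := Finset.sum_congr rfl hcst
        _ = (k : ℝ) * (3 * S1 + 4 * S2) := by
            rw [Finset.sum_const, hcard2, nsmul_eq_mul]
    have hSboth : ¬ (S1 = 0 ∧ S2 = 0) := by
      rintro ⟨h1, h2⟩
      apply hW0
      funext p
      have h := hrow p
      rw [h1, h2] at h
      have : x * W p = 0 := by rw [h]; ring
      have := mul_eq_zero.mp this
      simpa [hx] using this
    have hS1ne : S1 ≠ 0 := by
      intro h1
      apply hSboth
      refine ⟨h1, ?_⟩
      rw [h1] at hS1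
      have : (m : ℝ) * (3 * S2) = 0 := by linarith [hS1]
      rcases mul_eq_zero.mp this with h | h
      · exact absurd h (by positivity)
      · linarith
    have hS2ne : S2 ≠ 0 := by
      intro h2
      apply hSboth
      refine ⟨?_, h2⟩
      rw [h2] at hS2
      have : (k : ℝ) * (3 * S1) = 0 := by linarith [hS2]
      rcases mul_eq_zero.mp this with h | h
      · exact absurd h (by positivity)
      · linarith
    have e1 : (x - 2 * (m : ℝ)) * S1 = 3 * (m : ℝ) * S2 := by linear_combination hS1
    have e2 : (x - 4 * (k : ℝ)) * S2 = 3 * (k : ℝ) * S1 := by linear_combination hS2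
    have e3 : ((x - 2 * (m : ℝ)) * (x - 4 * (k : ℝ))) * (S1 * S2)
        = (9 * (m : ℝ) * (k : ℝ)) * (S1 * S2) := by
      linear_combination ((x - 4 * (k : ℝ)) * S2) * e1 + (3 * (m : ℝ) * S2) * e2
    have h9 : (x - 2 * (m : ℝ)) * (x - 4 * (k : ℝ)) = 9 * (m : ℝ) * (k : ℝ) :=
      mul_right_cancel₀ (mul_ne_zero hS1ne hS2ne) e3
    have hquad : (x - E1) ^ 2 = D := by
      rw [hE1, hD, ← hmr]
      linear_combination h9 + (2 * x) * h2k
    have habs : |x - E1| = Real.sqrt D := by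
      rw [← Real.sqrt_sq_eq_abs, hquad]
    rcases (abs_eq (Real.sqrt_nonneg D)).mp habs with h | h
    · left; linarith
    · right; linarith
  · intro h
    have hquad : (x - E1) ^ 2 = D := by
      rcases h with h | h
      · calc (x - E1) ^ 2 = Real.sqrt D ^ 2 := by rw [h]; ring
          _ = D := Real.sq_sqrt hD0
      · calc (x - E1) ^ 2 = Real.sqrt D ^ 2 := by rw [h]; ring
          _ = D := Real.sq_sqrt hD0
    have h9 : (x - 2 * (m : ℝ)) * (x - 4 * (k : ℝ)) = 9 * (m : ℝ) * (k : ℝ) := by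
      rw [hE1, hD, ← hmr] at hquad
      linear_combination hquad - (2 * x) * h2k
    refine ⟨fun q => if c ∈ q.1 then x - 4 * (k : ℝ) else 3 * (m : ℝ), ?_, ?_⟩
    · -- nonzero: there is a pair of leaves
      have hcard : 1 < (Finset.univ.erase c).card := by
        rw [Finset.card_erase_of_mem (Finset.mem_univ c), Finset.card_univ]
        omega
      obtain ⟨u, hu, v, hv, huv⟩ := Finset.one_lt_card.mp hcard
      have hu' : u ≠ c := (Finset.mem_erase.mp hu).1
      have hv' : v ≠ c := (Finset.mem_erase.mp hv).1
      intro h0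
      have := congrFun h0 ⟨s(u, v), by rw [Sym2.mk_isDiag_iff]; exact huv⟩
      have hcm : ¬ c ∈ s(u, v) := by
        rw [Sym2.mem_iff]
        push_neg
        exact ⟨Ne.symm hu', Ne.symm hv'⟩
      rw [if_neg hcm] at this
      have : (m : ℝ) = 0 := by
        have := this
        simp at this
        linarith [this]
      linarith
    · funext p
      rw [key]
      have hSum1 : (∑ q ∈ F1, (if c ∈ q.1 then x - 4 * (k : ℝ) else 3 * (m : ℝ)))
          = (m : ℝ) * (x - 4 * (k : ℝ)) := by
        have hcst : ∀ q ∈ F1, (if c ∈ q.1 then x - 4 * (k : ℝ) else 3 * (m : ℝ))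
            = x - 4 * (k : ℝ) := by
          intro q hq
          have hq' : c ∈ q.1 := by
            have h2 := Finset.mem_filter.mp (hF1 ▸ hq)
            exact h2.2
          rw [if_pos hq']
        rw [Finset.sum_congr rfl hcst, Finset.sum_const, hcard1, nsmul_eq_mul]
      have hSum2 : (∑ q ∈ F2, (if c ∈ q.1 then x - 4 * (k : ℝ) else 3 * (m : ℝ)))
          = (k : ℝ) * (3 * (m : ℝ)) := by
        have hcst : ∀ q ∈ F2, (if c ∈ q.1 then x - 4 * (k : ℝ) else 3 * (m : ℝ))
            = 3 * (m : ℝ) := by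
          intro q hq
          have hq' : ¬ c ∈ q.1 := by
            have h2 := Finset.mem_filter.mp (hF2 ▸ hq)
            exact h2.2
          rw [if_neg hq']
        rw [Finset.sum_congr rfl hcst, Finset.sum_const, hcard2, nsmul_eq_mul]
      rw [hSum1, hSum2]
      simp only [Pi.smul_apply, smul_eq_mul]
      by_cases hp : c ∈ p.1
      · rw [if_pos hp, if_pos hp, if_pos hp]
        linear_combination -h9
      · rw [if_neg hp, if_neg hp, if_neg hp]
        ring
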